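/- arXiv:math/0410267 — 2 statements merged into one kernel-verified Lean document; each statement's English description precedes it below -/
import Mathlib

section
/- Let (τ, T, ≤) be a weak stability condition on the abelian category 𝒜 with respect to cl, and suppose 𝒜 is noetherian and τ-artinian. Then for every nonzero object X of 𝒜 there exists a unique τ^max ∈ T such that: some nonzero τ-semistable subobject B ⊆ X has τ(cl B) = τ^max, and every nonzero τ-semistable subobject A ⊆ X has τ(cl A) ≤ τ^max. -/
open CategoryTheory CategoryTheory.Limits

namespace JoyceIII

universe u v

variable {𝒜 : Type u} [Category.{v} 𝒜] [Abelian 𝒜]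
variable {K : Type*} [AddCommGroup K] {T : Type*} [LinearOrder T]

/-- `α ∈ C(𝒜)`: `α` is the class of some nonzero object of `𝒜`. -/
def InC (cl : 𝒜 → K) (α : K) : Prop := ∃ X : 𝒜, ¬ IsZero X ∧ cl X = α

/-- `cl` is additive on short exact sequences: `cl Y = cl X + cl Z` for every
short exact sequence `0 → X → Y → Z → 0`. -/
def ClAdditive (cl : 𝒜 → K) : Prop :=
  ∀ S : ShortComplex 𝒜, S.ShortExact → cl S.X₂ = cl S.X₁ + cl S.X₃

/-- `cl X = 0` implies `X ≅ 0`. -/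
def ClNondeg (cl : 𝒜 → K) : Prop := ∀ X : 𝒜, cl X = 0 → IsZero X

/-- `(τ, T, ≤)` is a weak stability condition: the weak seesaw inequality holds. -/
def IsWeakStability (cl : 𝒜 → K) (τ : K → T) : Prop :=
  ∀ α β γ : K, InC cl α → InC cl β → InC cl γ → β = α + γ →
    (τ α ≤ τ β ∧ τ β ≤ τ γ) ∨ (τ γ ≤ τ β ∧ τ β ≤ τ α)

/-- `(τ, T, ≤)` is a stability condition: the seesaw inequality holds. -/
def IsStability (cl : 𝒜 → K) (τ : K → T) : Prop :=
  ∀ α β γ : K, InC cl α → InC cl β → InC cl γ → β = α + γ →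
    (τ α < τ β ∧ τ β < τ γ) ∨ (τ γ < τ β ∧ τ β < τ α) ∨ (τ α = τ β ∧ τ β = τ γ)

/-- The quotient object `X/S` of `X` by a subobject `S`, i.e. the cokernel of
the inclusion `S → X`. -/
noncomputable def quotBySub {X : 𝒜} (S : Subobject X) : 𝒜 := cokernel S.arrow

/-- The quotient `B / A` of subobjects `A ≤ B` of `X` (implemented as the
cokernel of the inclusion `A ⊓ B → B`, which agrees with `B / A` when `A ≤ B`). -/
noncomputable def subQuot {X : 𝒜} (A B : Subobject X) : 𝒜 :=
  cokernel (Subobject.ofLE (A ⊓ B) B inf_le_right)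

/-- `X` is `τ`-semistable: `X` is nonzero and every subobject `S ⊆ X` with
`S ≇ 0`, `S ≠ X` satisfies `τ(cl S) ≤ τ(cl (X/S))`. -/
def Semistable (cl : 𝒜 → K) (τ : K → T) (X : 𝒜) : Prop :=
  ¬ IsZero X ∧ ∀ S : Subobject X, ¬ IsZero ((S : 𝒜)) → S ≠ ⊤ →
    τ (cl ((S : 𝒜))) ≤ τ (cl (quotBySub S))

/-- `X` is `τ`-stable: `X` is nonzero and every subobject `S ⊆ X` with
`S ≇ 0`, `S ≠ X` satisfies `τ(cl S) < τ(cl (X/S))`. -/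
def Stable (cl : 𝒜 → K) (τ : K → T) (X : 𝒜) : Prop :=
  ¬ IsZero X ∧ ∀ S : Subobject X, ¬ IsZero ((S : 𝒜)) → S ≠ ⊤ →
    τ (cl ((S : 𝒜))) < τ (cl (quotBySub S))

/-- `𝒜` is noetherian: all ascending chains of subobjects stabilize. -/
def CatNoetherian (ℬ : Type u) [Category.{v} ℬ] [Abelian ℬ] : Prop :=
  ∀ (X : ℬ) (A : ℕ → Subobject X), (∀ n, A n ≤ A (n + 1)) →
    ∃ N, ∀ n, N ≤ n → A n = A N

/-- `𝒜` is `τ`-artinian: there is no infinite chain of subobjects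
`⋯ ⊆ A₂ ⊆ A₁ ⊆ X` with `A (n+1) ≠ A n` and `τ(cl A (n+1)) ≥ τ(cl (A n / A (n+1)))`. -/
def TauArtinian (cl : 𝒜 → K) (τ : K → T) : Prop :=
  ¬ ∃ (X : 𝒜) (A : ℕ → Subobject X),
      (∀ n, A (n + 1) ≤ A n) ∧ (∀ n, A (n + 1) ≠ A n) ∧
      ∀ n, τ (cl (subQuot (A (n + 1)) (A n))) ≤ τ (cl ((A (n + 1) : 𝒜)))

end JoyceIII

/-! Among the nonzero subobjects `A ⊆ X` containing every semistable subobject `B` with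
`τ(A) < τ(B)` (for instance `X` itself), take `A` minimal for the well-founded relation
"`A' ⊊ A` and `τ(A/A') ≤ τ(A')`" provided by τ-artinianity. The same minimality argument gives a
semistable `S ⊆ A` with `τ(A) ≤ τ(S)`, and `τ(S)` is the maximum: if a semistable `B` had
`τ(S) < τ(B)`, a noetherian-maximal nonzero `M ⊆ A` with `τ(B) ≤ τ(M)` would absorb every
semistable `B'` with `τ(M) < τ(B')` (seesaw, as `B' ↠ (B' + M)/M`), and then `M ⊊ A` with
`τ(A) < τ(M)` contradicts the minimality of `A`. -/

namespace JoyceIII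

variable {𝒜 : Type*} [Category 𝒜] {K : Type*} {T : Type*} [LinearOrder T]
  {cl : 𝒜 → K} {τ : K → T}

lemma IsWeakStability.seesaw [AddCommGroup K] (hwsc : IsWeakStability cl τ) {P Y Q : 𝒜}
    (hP : ¬ IsZero P) (hY : ¬ IsZero Y) (hQ : ¬ IsZero Q) (h : cl Y = cl P + cl Q) :
    (τ (cl P) ≤ τ (cl Y) ∧ τ (cl Y) ≤ τ (cl Q)) ∨ (τ (cl Q) ≤ τ (cl Y) ∧ τ (cl Y) ≤ τ (cl P)) :=
  hwsc _ _ _ ⟨P, hP, rfl⟩ ⟨Y, hY, rfl⟩ ⟨Q, hQ, rfl⟩ h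

variable [Abelian 𝒜]

lemma isIso_of_isZero_cokernel {P Y : 𝒜} (f : P ⟶ Y) [Mono f] (h : IsZero (cokernel f)) :
    IsIso f :=
  have := Preadditive.epi_of_isZero_cokernel f h
  isIso_of_mono_of_epi f

lemma not_isZero_quotBySub {A : 𝒜} {S : Subobject A} (h : S ≠ ⊤) : ¬ IsZero (quotBySub S) :=
  fun hz => h <|
    have := isIso_of_isZero_cokernel S.arrow hz
    Subobject.eq_top_of_isIso_arrow S

lemma not_isZero_cokernel_ofLE {X : 𝒜} {A' A : Subobject X} (h : A' < A) :
    ¬ IsZero (cokernel (Subobject.ofLE A' A h.le)) :=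
  fun hz => h.ne <|
    have := isIso_of_isZero_cokernel _ hz
    Subobject.eq_of_comm (asIso (Subobject.ofLE A' A h.le)) (Subobject.ofLE_arrow _)

lemma not_isZero_subQuot {X : 𝒜} {A' A : Subobject X} (h : A' < A) : ¬ IsZero (subQuot A' A) :=
  not_isZero_cokernel_ofLE (show A' ⊓ A < A by rwa [inf_eq_left.mpr h.le])

lemma eq_zero_of_kernelSubobject_eq_top {P Q : 𝒜} {f : P ⟶ Q} (h : kernelSubobject f = ⊤) :
    f = 0 := by
  have : IsIso (kernelSubobject f).arrow := (Subobject.isIso_arrow_iff_eq_top _).2 h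
  exact (cancel_epi (kernelSubobject f).arrow).1 (by simp)

lemma eq_zero_of_ofLE_sup_comp_eq_zero {X Z : 𝒜} {B C : Subobject X}
    (v : ((B ⊔ C : Subobject X) : 𝒜) ⟶ Z)
    (hB : Subobject.ofLE B (B ⊔ C) le_sup_left ≫ v = 0)
    (hC : Subobject.ofLE C (B ⊔ C) le_sup_right ≫ v = 0) : v = 0 := by
  let Φ := Subobject.subobjectOrderIso (B ⊔ C)
  have le_ker {W : Subobject X} (hW : W ≤ B ⊔ C) (h : Subobject.ofLE W _ hW ≫ v = 0) :
      W ≤ (Φ (kernelSubobject v)).1 :=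
    Subobject.le_mk_of_comm (factorThruKernelSubobject v _ h) <| by
      rw [← Category.assoc, factorThruKernelSubobject_comp_arrow, Subobject.ofLE_arrow]
  refine eq_zero_of_kernelSubobject_eq_top (Φ.injective ?_)
  rw [Φ.map_top]
  exact top_le_iff.1 (sup_le (le_ker _ hB) (le_ker _ hC))

instance epi_ofLE_sup_comp_cokernel_π {X : 𝒜} (B C : Subobject X) :
    Epi (Subobject.ofLE B (B ⊔ C) le_sup_left ≫
      cokernel.π (Subobject.ofLE C (B ⊔ C) le_sup_right)) := by
  refine (Preadditive.epi_iff_cancel_zero _).2 fun Z u hu => (cancel_epi (cokernel.π _)).1 ?_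
  rw [comp_zero]
  exact eq_zero_of_ofLE_sup_comp_eq_zero _ (by simpa using hu) (by simp)

/-- One step of a chain of the kind excluded by `TauArtinian`. -/
def TauStep (cl : 𝒜 → K) (τ : K → T) {X : 𝒜} (A' A : Subobject X) : Prop :=
  A' < A ∧ τ (cl (subQuot A' A)) ≤ τ (cl (A' : 𝒜))

lemma TauArtinian.wellFounded (hart : TauArtinian cl τ) (X : 𝒜) :
    WellFounded (TauStep cl τ (X := X)) :=
  wellFounded_iff_isEmpty_descending_chain.2
    ⟨fun ⟨A, hA⟩ => hart ⟨X, A, fun n => (hA n).1.le, fun n => (hA n).1.ne, fun n => (hA n).2⟩⟩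

lemma CatNoetherian.wellFoundedGT (hnoeth : CatNoetherian 𝒜) (X : 𝒜) :
    WellFoundedGT (Subobject X) :=
  wellFoundedGT_iff_monotone_chain_condition.2 fun f =>
    let ⟨N, hN⟩ := hnoeth X f fun n => f.mono n.le_succ
    ⟨N, fun m hm => (hN m hm).symm⟩

def ContainsSemistablesAbove (cl : 𝒜 → K) (τ : K → T) {X : 𝒜} (t : T) (A : Subobject X) :
    Prop :=
  ∀ B : Subobject X, Semistable cl τ (B : 𝒜) → t < τ (cl (B : 𝒜)) → B ≤ A

variable [AddCommGroup K]

namespace ClAdditive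

lemma cl_eq_add_cl_cokernel (hadd : ClAdditive cl) {P Y : 𝒜} (f : P ⟶ Y) [Mono f] :
    cl Y = cl P + cl (cokernel f) :=
  hadd (ShortComplex.mk f (cokernel.π f) (cokernel.condition f))
    { exact := ShortComplex.exact_of_g_is_cokernel _ (cokernelIsCokernel f) }

lemma cl_eq_add_cl_of_epi (hadd : ClAdditive cl) {Y Q : 𝒜} (e : Y ⟶ Q) [Epi e] :
    cl Y = cl (kernel e) + cl Q :=
  hadd (ShortComplex.mk (kernel.ι e) e (kernel.condition e))
    { exact := ShortComplex.exact_of_f_is_kernel _ (kernelIsKernel e) }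

lemma cl_eq_zero (hadd : ClAdditive cl) {Z : 𝒜} (hZ : IsZero Z) : cl Z = 0 := by
  simpa using hadd (ShortComplex.mk (𝟙 Z) (𝟙 Z) (hZ.eq_of_src _ _))
    { exact := ShortComplex.exact_of_isZero_X₂ _ hZ }

lemma cl_eq_of_iso (hadd : ClAdditive cl) {P Q : 𝒜} (e : P ≅ Q) : cl P = cl Q := by
  simpa [hadd.cl_eq_zero (isZero_cokernel_of_epi e.hom)] using
    (hadd.cl_eq_add_cl_cokernel e.hom).symm

lemma cl_eq_add_cl_quotBySub (hadd : ClAdditive cl) {A : 𝒜} (S : Subobject A) :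
    cl A = cl (S : 𝒜) + cl (quotBySub S) :=
  hadd.cl_eq_add_cl_cokernel S.arrow

lemma cl_eq_add_cl_subQuot (hadd : ClAdditive cl) {X : 𝒜} {A' A : Subobject X} (h : A' ≤ A) :
    cl (A : 𝒜) = cl (A' : 𝒜) + cl (subQuot A' A) := by
  have : cl (A : 𝒜) = cl ((A' ⊓ A : Subobject X) : 𝒜) + cl (subQuot A' A) :=
    hadd.cl_eq_add_cl_cokernel _
  rwa [inf_eq_left.mpr h] at this

end ClAdditive

namespace Semistable

lemma tau_le_tau_quotBySub (hadd : ClAdditive cl) (hwsc : IsWeakStability cl τ) {A : 𝒜}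
    (hA : Semistable cl τ A) {S : Subobject A} (hS : S ≠ ⊤) :
    τ (cl A) ≤ τ (cl (quotBySub S)) := by
  have hcl := hadd.cl_eq_add_cl_quotBySub S
  by_cases hz : IsZero (S : 𝒜)
  · rw [hcl, hadd.cl_eq_zero hz, zero_add]
  · have := hA.2 S hz hS
    rcases hwsc.seesaw hz hA.1 (not_isZero_quotBySub hS) hcl with h | h <;> order

lemma tau_le_of_epi (hadd : ClAdditive cl) (hwsc : IsWeakStability cl τ) {A Q : 𝒜}
    (hA : Semistable cl τ A) (e : A ⟶ Q) [Epi e] (hQ : ¬ IsZero Q) : τ (cl A) ≤ τ (cl Q) := by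
  have hS : kernelSubobject e ≠ ⊤ := fun h =>
    hQ (IsZero.of_epi_eq_zero e (eq_zero_of_kernelSubobject_eq_top h))
  have hcl : cl (quotBySub (kernelSubobject e)) = cl Q := by
    refine add_left_cancel (a := cl (kernel e)) ?_
    rw [← hadd.cl_eq_add_cl_of_epi, ← hadd.cl_eq_of_iso (kernelSubobjectIso e),
      ← hadd.cl_eq_add_cl_quotBySub]
  exact hcl ▸ hA.tau_le_tau_quotBySub hadd hwsc hS

end Semistable

lemma le_tau_sup (hadd : ClAdditive cl) (hwsc : IsWeakStability cl τ) {X : 𝒜}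
    {B C : Subobject X} {t : T} (hB : Semistable cl τ (B : 𝒜)) (hBt : t ≤ τ (cl (B : 𝒜)))
    (hC : ¬ IsZero (C : 𝒜)) (hCt : t ≤ τ (cl (C : 𝒜))) :
    t ≤ τ (cl ((B ⊔ C : Subobject X) : 𝒜)) := by
  obtain h | hlt := (le_sup_right : C ≤ B ⊔ C).eq_or_lt
  · rwa [← h]
  have hQ := not_isZero_cokernel_ofLE hlt
  have hBQ := hB.tau_le_of_epi hadd hwsc
    (Subobject.ofLE B _ le_sup_left ≫ cokernel.π (Subobject.ofLE C _ hlt.le)) hQ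
  have hBC : ¬ IsZero ((B ⊔ C : Subobject X) : 𝒜) :=
    fun h => hC (h.of_mono (Subobject.ofLE C _ hlt.le))
  rcases hwsc.seesaw hC hBC hQ (hadd.cl_eq_add_cl_cokernel _) with h | h <;> order

lemma tauStep_of_tau_lt (hadd : ClAdditive cl) (hwsc : IsWeakStability cl τ) {X : 𝒜}
    {A' A : Subobject X} (hA' : ¬ IsZero (A' : 𝒜)) (hlt : A' < A)
    (hτ : τ (cl (A : 𝒜)) < τ (cl (A' : 𝒜))) : TauStep cl τ A' A := by
  have hA : ¬ IsZero (A : 𝒜) := fun h => hA' (h.of_mono (Subobject.ofLE A' A hlt.le))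
  refine ⟨hlt, ?_⟩
  rcases hwsc.seesaw hA' hA (not_isZero_subQuot hlt) (hadd.cl_eq_add_cl_subQuot hlt.le)
    with h | h <;> order

lemma exists_tauStep_of_not_semistable (hadd : ClAdditive cl) (hwsc : IsWeakStability cl τ)
    {X : 𝒜} {A : Subobject X} (hA : ¬ IsZero (A : 𝒜)) (hss : ¬ Semistable cl τ (A : 𝒜)) :
    ∃ A' : Subobject X, ¬ IsZero (A' : 𝒜) ∧ τ (cl (A : 𝒜)) ≤ τ (cl (A' : 𝒜)) ∧
      TauStep cl τ A' A := by
  obtain ⟨S, hS, hStop, hQS⟩ : ∃ S : Subobject (A : 𝒜), ¬ IsZero (S : 𝒜) ∧ S ≠ ⊤ ∧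
      τ (cl (quotBySub S)) < τ (cl (S : 𝒜)) := by
    simpa [Semistable, hA] using hss
  let Φ := Subobject.subobjectOrderIso A
  have hlt : (Φ S).1 < A :=
    (Φ S).2.lt_of_ne fun h => hStop <| Φ.injective <| by rw [Φ.map_top]; exact Subtype.ext h
  have hclS : cl ((Φ S).1 : 𝒜) = cl (S : 𝒜) := hadd.cl_eq_of_iso (Subobject.underlyingIso _)
  have hclQ : cl (subQuot (Φ S).1 A) = cl (quotBySub S) := by
    refine add_left_cancel (a := cl (S : 𝒜)) ?_
    rw [← hadd.cl_eq_add_cl_quotBySub, ← hclS, ← hadd.cl_eq_add_cl_subQuot hlt.le]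
  have hAS : τ (cl (A : 𝒜)) ≤ τ (cl (S : 𝒜)) := by
    rcases hwsc.seesaw hS hA (not_isZero_quotBySub hStop) (hadd.cl_eq_add_cl_quotBySub S)
      with h | h <;> order
  refine ⟨(Φ S).1, fun h => hS (h.of_iso (Subobject.underlyingIso _).symm), hclS ▸ hAS, hlt, ?_⟩
  rw [hclQ, hclS]
  exact hQS.le

lemma exists_semistable_le (hadd : ClAdditive cl) (hwsc : IsWeakStability cl τ)
    (hart : TauArtinian cl τ) {X : 𝒜} {A : Subobject X} (hA : ¬ IsZero (A : 𝒜)) :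
    ∃ S ≤ A, Semistable cl τ (S : 𝒜) ∧ τ (cl (A : 𝒜)) ≤ τ (cl (S : 𝒜)) := by
  obtain ⟨S, ⟨hSA, hS, hAS⟩, hmin⟩ := (hart.wellFounded X).has_min
    {S | S ≤ A ∧ ¬ IsZero (S : 𝒜) ∧ τ (cl (A : 𝒜)) ≤ τ (cl (S : 𝒜))} ⟨A, le_rfl, hA, le_rfl⟩
  refine ⟨S, hSA, not_not.1 fun hss => ?_, hAS⟩
  obtain ⟨S', hS', hSS', hstep⟩ := exists_tauStep_of_not_semistable hadd hwsc hS hss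
  exact hmin S' ⟨hstep.1.le.trans hSA, hS', hAS.trans hSS'⟩ hstep

lemma exists_le_containsSemistablesAbove (hadd : ClAdditive cl) (hwsc : IsWeakStability cl τ)
    (hnoeth : CatNoetherian 𝒜) {X : 𝒜} {A B : Subobject X}
    (hA : ContainsSemistablesAbove cl τ (τ (cl (A : 𝒜))) A) (hB : Semistable cl τ (B : 𝒜))
    (hAB : τ (cl (A : 𝒜)) < τ (cl (B : 𝒜))) :
    ∃ M ≤ A, ¬ IsZero (M : 𝒜) ∧ τ (cl (B : 𝒜)) ≤ τ (cl (M : 𝒜)) ∧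
      ContainsSemistablesAbove cl τ (τ (cl (M : 𝒜))) M := by
  have := hnoeth.wellFoundedGT X
  obtain ⟨M, ⟨hMA, hM, hBM⟩, hmax⟩ := wellFounded_gt.has_min
    {C | C ≤ A ∧ ¬ IsZero (C : 𝒜) ∧ τ (cl (B : 𝒜)) ≤ τ (cl (C : 𝒜))}
    ⟨B, hA B hB hAB, hB.1, le_rfl⟩
  refine ⟨M, hMA, hM, hBM, fun B' hB' hMB' => ?_⟩
  have hsup : B' ⊔ M ≤ A ∧ ¬ IsZero ((B' ⊔ M : Subobject X) : 𝒜) ∧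
      τ (cl (B : 𝒜)) ≤ τ (cl ((B' ⊔ M : Subobject X) : 𝒜)) :=
    ⟨sup_le (hA B' hB' (by order)) hMA,
      fun h => hM (h.of_mono (Subobject.ofLE M _ le_sup_right)),
      le_tau_sup hadd hwsc hB' (by order) hM hBM⟩
  exact le_sup_left.trans (le_sup_right.eq_of_not_lt (hmax _ hsup)).ge

lemma exists_semistable_tau_max (hadd : ClAdditive cl) (hwsc : IsWeakStability cl τ)
    (hnoeth : CatNoetherian 𝒜) (hart : TauArtinian cl τ) {X : 𝒜} (hX : ¬ IsZero X) :
    ∃ S : Subobject X, Semistable cl τ (S : 𝒜) ∧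
      ∀ B : Subobject X, Semistable cl τ (B : 𝒜) → τ (cl (B : 𝒜)) ≤ τ (cl (S : 𝒜)) := by
  obtain ⟨A, ⟨hA, hAcont⟩, hmin⟩ := (hart.wellFounded X).has_min
    {A | ¬ IsZero (A : 𝒜) ∧ ContainsSemistablesAbove cl τ (τ (cl (A : 𝒜))) A}
    ⟨⊤, fun h => hX (h.of_iso (asIso (⊤ : Subobject X).arrow).symm), fun _ _ _ => le_top⟩
  obtain ⟨S, -, hS, hAS⟩ := exists_semistable_le hadd hwsc hart hA
  refine ⟨S, hS, fun B hB => not_lt.1 fun hSB => ?_⟩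
  obtain ⟨M, hMA, hM, hBM, hMcont⟩ :=
    exists_le_containsSemistablesAbove hadd hwsc hnoeth hAcont hB (hAS.trans_lt hSB)
  have hAM : τ (cl (A : 𝒜)) < τ (cl (M : 𝒜)) := by order
  have hMA' : M < A := hMA.lt_of_ne (by rintro rfl; exact hAM.false)
  exact hmin M ⟨hM, hMcont⟩ (tauStep_of_tau_lt hadd hwsc hM hMA' hAM)

end JoyceIII

namespace JoyceIII

universe u v

variable {𝒜 : Type u} [Category.{v} 𝒜] [Abelian 𝒜]
variable {K : Type*} [AddCommGroup K] {T : Type*} [LinearOrder T]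

theorem existsUnique_tau_max_general (cl : 𝒜 → K) (τ : K → T)
    (hadd : ClAdditive cl)
    (hwsc : IsWeakStability cl τ)
    (hnoeth : CatNoetherian 𝒜) (hart : TauArtinian cl τ)
    (X : 𝒜) (hX : ¬ IsZero X) :
    ∃! t : T,
      (∃ B : Subobject X, ¬ IsZero ((B : 𝒜)) ∧ Semistable cl τ ((B : 𝒜)) ∧
        τ (cl ((B : 𝒜))) = t) ∧
      ∀ A : Subobject X, ¬ IsZero ((A : 𝒜)) → Semistable cl τ ((A : 𝒜)) →
        τ (cl ((A : 𝒜))) ≤ t := by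
  obtain ⟨S, hS, hmax⟩ := exists_semistable_tau_max hadd hwsc hnoeth hart hX
  refine ⟨τ (cl (S : 𝒜)), ⟨⟨S, hS.1, hS, rfl⟩, fun A _ hA => hmax A hA⟩, ?_⟩
  rintro t ⟨⟨B, -, hB, rfl⟩, htmax⟩
  exact le_antisymm (hmax B hB) (htmax S hS.1 hS)

/-- **Step 4 of the proof of Theorem 4.4.** If `𝒜` is noetherian and
`τ`-artinian, then every nonzero `X` has a unique `τᵐᵃˣ ∈ T` such that some
nonzero `τ`-semistable subobject `B ⊆ X` has `τ(cl B) = τᵐᵃˣ` and every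
nonzero `τ`-semistable subobject `A ⊆ X` has `τ(cl A) ≤ τᵐᵃˣ`. -/
theorem existsUnique_tau_max (cl : 𝒜 → K) (τ : K → T)
    (hadd : ClAdditive cl) (hnd : ClNondeg cl)
    (hwsc : IsWeakStability cl τ)
    (hnoeth : CatNoetherian 𝒜) (hart : TauArtinian cl τ)
    (X : 𝒜) (hX : ¬ IsZero X) :
    ∃! t : T,
      (∃ B : Subobject X, ¬ IsZero ((B : 𝒜)) ∧ Semistable cl τ ((B : 𝒜)) ∧
        τ (cl ((B : 𝒜))) = t) ∧
      ∀ A : Subobject X, ¬ IsZero ((A : 𝒜)) → Semistable cl τ ((A : 𝒜)) →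
        τ (cl ((A : 𝒜))) ≤ t :=
  existsUnique_tau_max_general cl τ hadd hwsc hnoeth hart X hX

end JoyceIII
end

section
/- Let (τ, T, ≤) be a weak stability condition on the abelian category 𝒜 with respect to cl, and suppose 𝒜 is τ-artinian. Let X be a nonzero object of 𝒜 and t ∈ T be such that every nonzero τ-semistable subobject of X has τ-value at most t, i.e. τ(cl A) ≤ t for every nonzero τ-semistable subobject A ⊆ X. If A, B ⊆ X are nonzero τ-semistable subobjects with τ(cl A) = τ(cl B) = t, then A + B (the join of A and B in the lattice of subobjects of X) is τ-semistable with τ(cl (A + B)) = t. -/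
open CategoryTheory CategoryTheory.Limits

namespace JoyceIII

universe u v

variable {𝒜 : Type u} [Category.{v} 𝒜] [Abelian 𝒜]
variable {K : Type*} [AddCommGroup K] {T : Type*} [LinearOrder T]

section Helpers

variable {cl : 𝒜 → K} {τ : K → T}

lemma cl_of_isZero (hadd : ClAdditive cl) {Z : 𝒜} (hZ : IsZero Z) : cl Z = 0 := by
  have h := hadd (ShortComplex.mk (𝟙 Z) (𝟙 Z) (hZ.eq_of_src _ _))
    (ShortComplex.ShortExact.mk' (ShortComplex.exact_of_isZero_X₂ _ hZ)
      inferInstance inferInstance)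
  dsimp at h
  linear_combination (norm := abel) -h

lemma isZero_cokernel_of_epi {U V : 𝒜} (f : U ⟶ V) [Epi f] : IsZero (cokernel f) := by
  rw [IsZero.iff_id_eq_zero]
  rw [← cancel_epi (cokernel.π f), cokernel.π_of_epi]
  simp

lemma cl_of_mono (hadd : ClAdditive cl) {U V : 𝒜} (f : U ⟶ V) [Mono f] :
    cl V = cl U + cl (cokernel f) :=
  hadd (ShortComplex.mk f (cokernel.π f) (cokernel.condition f))
    (ShortComplex.ShortExact.mk'
      (ShortComplex.exact_of_g_is_cokernel _ (cokernelIsCokernel f))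
      inferInstance inferInstance)

lemma cl_of_epi (hadd : ClAdditive cl) {V W : 𝒜} (g : V ⟶ W) [Epi g] :
    cl V = cl (kernel g) + cl W :=
  hadd (ShortComplex.mk (kernel.ι g) g (kernel.condition g))
    (ShortComplex.ShortExact.mk'
      (ShortComplex.exact_of_f_is_kernel _ (kernelIsKernel g))
      inferInstance inferInstance)

lemma cl_iso (hadd : ClAdditive cl) {Y Z : 𝒜} (e : Y ≅ Z) : cl Y = cl Z := by
  have h := cl_of_mono hadd e.hom
  rw [cl_of_isZero hadd (isZero_cokernel_of_epi e.hom)] at h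
  linear_combination (norm := abel) -h

lemma isIso_of_mono_of_isZero_cokernel {U V : 𝒜} (f : U ⟶ V) [Mono f]
    (h : IsZero (cokernel f)) : IsIso f := by
  have : Epi f := by
    refine Preadditive.epi_of_cancel_zero f (fun g hg => ?_)
    have := cokernel.π_desc f g hg
    rw [h.eq_of_src (cokernel.desc f g hg) 0] at this
    simpa using this.symm
  exact isIso_of_mono_of_epi f

lemma cl_quotBySub (hadd : ClAdditive cl) {X : 𝒜} (S : Subobject X) :
    cl (quotBySub S) = cl X - cl ((S : 𝒜)) := by
  have := cl_of_mono hadd S.arrow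
  unfold quotBySub
  linear_combination (norm := abel) -this

lemma cl_coker_ofLE (hadd : ClAdditive cl) {X : 𝒜} {A B : Subobject X} (h : A ≤ B) :
    cl (cokernel (Subobject.ofLE A B h)) = cl ((B : 𝒜)) - cl ((A : 𝒜)) := by
  have := cl_of_mono hadd (Subobject.ofLE A B h)
  linear_combination (norm := abel) -this

lemma cl_top (hadd : ClAdditive cl) (X : 𝒜) :
    cl (((⊤ : Subobject X) : 𝒜)) = cl X := by
  have h := cl_quotBySub hadd (⊤ : Subobject X)
  have hz : IsZero (quotBySub (⊤ : Subobject X)) := isZero_cokernel_of_epi _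
  rw [cl_of_isZero hadd hz] at h
  linear_combination (norm := abel) h

lemma isZero_coe_iff {X : 𝒜} (S : Subobject X) : IsZero ((S : 𝒜)) ↔ S = ⊥ := by
  constructor
  · intro h
    rw [← Subobject.mk_arrow S, Subobject.mk_eq_bot_iff_zero]
    exact h.eq_of_src _ _
  · rintro rfl
    exact (isZero_zero 𝒜).of_iso Subobject.botCoeIsoZero


lemma cl_biprod (hadd : ClAdditive cl) (U V : 𝒜) : cl (U ⊞ V) = cl U + cl V := by
  refine hadd (ShortComplex.mk (biprod.inl : U ⟶ U ⊞ V) (biprod.snd) (by simp))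
    (ShortComplex.Splitting.shortExact ?_)
  exact { r := biprod.fst, s := biprod.inr }

lemma mk_comp_le {X : 𝒜} (M : Subobject X) (T : Subobject ((M : 𝒜))) :
    Subobject.mk (T.arrow ≫ M.arrow) ≤ M := by
  conv_rhs => rw [← Subobject.mk_arrow M]
  exact Subobject.mk_le_mk_of_comm T.arrow rfl

lemma eq_top_of_mk_comp_eq {X : 𝒜} (M : Subobject X) (T : Subobject ((M : 𝒜)))
    (h : Subobject.mk (T.arrow ≫ M.arrow) = M) : T = ⊤ := by
  have hle : M ≤ Subobject.mk (T.arrow ≫ M.arrow) := le_of_eq h.symm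
  set k := Subobject.ofLE M _ hle
  have hk : k ≫ (Subobject.mk (T.arrow ≫ M.arrow)).arrow = M.arrow := Subobject.ofLE_arrow hle
  set m := k ≫ (Subobject.underlyingIso (T.arrow ≫ M.arrow)).hom with hm
  have hma : m ≫ (T.arrow ≫ M.arrow) = M.arrow := by
    rw [hm, Category.assoc, Subobject.underlyingIso_hom_comp_eq_mk]
    exact hk
  have hmT : m ≫ T.arrow = 𝟙 ((M : 𝒜)) := by
    rw [← cancel_mono M.arrow]
    simpa [Category.assoc] using hma
  have : IsSplitEpi T.arrow := ⟨⟨⟨m, hmT⟩⟩⟩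
  have : IsIso T.arrow := isIso_of_mono_of_epi _
  exact Subobject.eq_top_of_isIso_arrow T

lemma hom_eq_zero_of_sup {X : 𝒜} {A B : Subobject X} {W : 𝒜}
    (h : (((A ⊔ B : Subobject X)) : 𝒜) ⟶ W)
    (hA : Subobject.ofLE A (A ⊔ B) le_sup_left ≫ h = 0)
    (hB : Subobject.ofLE B (A ⊔ B) le_sup_right ≫ h = 0) : h = 0 := by
  have hAκ : A ≤ Subobject.mk ((kernelSubobject h).arrow ≫ (A ⊔ B : Subobject X).arrow) := by
    conv_lhs => rw [← Subobject.mk_arrow A]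
    refine Subobject.mk_le_mk_of_comm (factorThruKernelSubobject h _ hA) ?_
    rw [← Category.assoc, factorThruKernelSubobject_comp_arrow]
    exact Subobject.ofLE_arrow _
  have hBκ : B ≤ Subobject.mk ((kernelSubobject h).arrow ≫ (A ⊔ B : Subobject X).arrow) := by
    conv_lhs => rw [← Subobject.mk_arrow B]
    refine Subobject.mk_le_mk_of_comm (factorThruKernelSubobject h _ hB) ?_
    rw [← Category.assoc, factorThruKernelSubobject_comp_arrow]
    exact Subobject.ofLE_arrow _
  have heq : Subobject.mk ((kernelSubobject h).arrow ≫ (A ⊔ B : Subobject X).arrow)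
      = (A ⊔ B : Subobject X) :=
    le_antisymm (mk_comp_le _ _) (sup_le hAκ hBκ)
  have htop : kernelSubobject h = ⊤ := eq_top_of_mk_comp_eq _ _ heq
  have hIso : IsIso (kernelSubobject h).arrow := by
    rw [Subobject.isIso_arrow_iff_eq_top]; exact htop
  have hz := kernelSubobject_arrow_comp h
  rw [← cancel_epi (kernelSubobject h).arrow]
  simpa using hz


lemma isPullback_inf_sup {X : 𝒜} (A B : Subobject X) :
    IsPullback (Subobject.ofLE (A ⊓ B) A inf_le_left)
      (Subobject.ofLE (A ⊓ B) B inf_le_right)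
      (Subobject.ofLE A (A ⊔ B) le_sup_left)
      (Subobject.ofLE B (A ⊔ B) le_sup_right) := by
  have comm : Subobject.ofLE (A ⊓ B) A inf_le_left ≫ Subobject.ofLE A (A ⊔ B) le_sup_left
      = Subobject.ofLE (A ⊓ B) B inf_le_right ≫ Subobject.ofLE B (A ⊔ B) le_sup_right := by
    rw [← cancel_mono (A ⊔ B : Subobject X).arrow]
    simp [Subobject.ofLE_arrow]
  refine IsPullback.of_isLimit (PullbackCone.IsLimit.mk comm
    (fun s => (A ⊓ B).factorThru (s.fst ≫ A.arrow) ((Subobject.inf_factors _).mpr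
      ⟨(Subobject.factors_iff _ _).mpr ⟨s.fst, rfl⟩, (Subobject.factors_iff _ _).mpr ⟨s.snd, by
        have hc := s.condition =≫ (A ⊔ B : Subobject X).arrow
        simpa [Category.assoc, Subobject.ofLE_arrow] using hc.symm⟩⟩))
    (fun s => by
      rw [← cancel_mono A.arrow, Category.assoc]
      simp only [Subobject.ofLE_arrow, Subobject.factorThru_arrow])
    (fun s => by
      rw [← cancel_mono B.arrow, Category.assoc]
      simp only [Subobject.ofLE_arrow, Subobject.factorThru_arrow]
      have hc := s.condition =≫ (A ⊔ B : Subobject X).arrow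
      simpa [Category.assoc, Subobject.ofLE_arrow] using hc)
    (fun s m hm₁ hm₂ => by
      rw [← cancel_mono (A ⊓ B : Subobject X).arrow, Subobject.factorThru_arrow]
      have : (A ⊓ B : Subobject X).arrow = Subobject.ofLE (A ⊓ B) A inf_le_left ≫ A.arrow :=
        (Subobject.ofLE_arrow _).symm
      rw [this, ← Category.assoc, hm₁]))


lemma cl_sup_inf (hadd : ClAdditive cl) {X : 𝒜} (A B : Subobject X) :
    cl (((A ⊔ B : Subobject X) : 𝒜)) + cl (((A ⊓ B : Subobject X) : 𝒜))
      = cl ((A : 𝒜)) + cl ((B : 𝒜)) := by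
  have hpb := isPullback_inf_sup A B
  set f := Subobject.ofLE A (A ⊔ B) le_sup_left
  set g := Subobject.ofLE B (A ⊔ B) le_sup_right
  set fst := Subobject.ofLE (A ⊓ B) A inf_le_left
  set snd := Subobject.ofLE (A ⊓ B) B inf_le_right
  have hzero : biprod.lift fst snd ≫ biprod.desc f (-g) = 0 := by
    simp [hpb.w]
  have hexact : (ShortComplex.mk _ _ hzero).Exact :=
    ShortComplex.exact_of_f_is_kernel _ hpb.isLimitKernelFork
  have hmono : Mono (biprod.lift fst snd) := mono_of_mono_fac (biprod.lift_fst fst snd)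
  have hepi : Epi (biprod.desc f (-g)) := by
    refine Preadditive.epi_of_cancel_zero _ (fun h hh => ?_)
    have h1 : f ≫ h = 0 := by simpa using biprod.inl ≫= hh
    have h2 : g ≫ h = 0 := by
      have := biprod.inr ≫= hh
      simp only [biprod.inr_desc_assoc, Limits.zero_comp, Limits.comp_zero,
        Preadditive.neg_comp, neg_eq_zero] at this
      exact this
    exact hom_eq_zero_of_sup h h1 h2
  have hse : (ShortComplex.mk _ _ hzero).ShortExact :=
    ShortComplex.ShortExact.mk' hexact hmono hepi
  have h1 := hadd _ hse
  have h2 := cl_biprod hadd ((A : 𝒜)) ((B : 𝒜))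
  dsimp at h1
  linear_combination (norm := abel) h2 - h1



lemma cl_subQuot (hadd : ClAdditive cl) {X : 𝒜} {A B : Subobject X} (h : A ≤ B) :
    cl (subQuot A B) = cl ((B : 𝒜)) - cl ((A : 𝒜)) := by
  rw [subQuot, cl_coker_ofLE hadd]
  have : A ⊓ B = A := inf_of_le_left h
  rw [show cl (((A ⊓ B : Subobject X)) : 𝒜) = cl ((A : 𝒜)) from congrArg (fun s => cl ((s : Subobject X) : 𝒜)) this]

lemma cl_ne_zero (hnd : ClNondeg cl) {Z : 𝒜} (hZ : ¬ IsZero Z) : cl Z ≠ 0 :=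
  fun h => hZ (hnd Z h)

lemma inC_of_nonzero {Z : 𝒜} (hZ : ¬ IsZero Z) : InC cl (cl Z) := ⟨Z, hZ, rfl⟩

/-- If the cokernel of `ofLE` is zero then the subobjects agree. -/
lemma eq_of_isZero_coker_ofLE {X : 𝒜} {A B : Subobject X} (h : A ≤ B)
    (hz : IsZero (cokernel (Subobject.ofLE A B h))) : A = B := by
  have : IsIso (Subobject.ofLE A B h) := isIso_of_mono_of_isZero_cokernel _ hz
  refine le_antisymm h (Subobject.le_of_comm (inv (Subobject.ofLE A B h)) ?_)
  simp [Subobject.ofLE_arrow]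

lemma eq_top_of_isZero_quotBySub {X : 𝒜} {S : Subobject X}
    (hz : IsZero (quotBySub S)) : S = ⊤ := by
  have : IsIso S.arrow := isIso_of_mono_of_isZero_cokernel _ hz
  exact Subobject.eq_top_of_isIso_arrow S

/-- A nonzero object sits between a nonzero subobject-class and quotient-class. -/
lemma seesaw (hadd : ClAdditive cl) (hnd : ClNondeg cl) (hwsc : IsWeakStability cl τ)
    {Y : 𝒜} (hY : ¬ IsZero Y) {α γ : K} (hα : InC cl α) (hγ : InC cl γ)
    (h : cl Y = α + γ) :
    (τ α ≤ τ (cl Y) ∧ τ (cl Y) ≤ τ γ) ∨ (τ γ ≤ τ (cl Y) ∧ τ (cl Y) ≤ τ α) :=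
  hwsc α (cl Y) γ hα (inC_of_nonzero hY) hγ h

/-- subobject of semistable has `τ` at most that of the whole. -/
lemma sub_le_self_τ (hadd : ClAdditive cl) (hnd : ClNondeg cl)
    (hwsc : IsWeakStability cl τ) {Y : 𝒜} (hss : Semistable cl τ Y)
    (S : Subobject Y) (hS : ¬ IsZero ((S : 𝒜))) :
    τ (cl ((S : 𝒜))) ≤ τ (cl Y) := by
  by_cases hT : S = ⊤
  · subst hT
    rw [cl_top hadd]
  · have hq : ¬ IsZero (quotBySub S) := fun hz => hT (eq_top_of_isZero_quotBySub hz)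
    have hsum : cl Y = cl ((S : 𝒜)) + cl (quotBySub S) := by
      rw [cl_quotBySub hadd]; abel
    have hle := hss.2 S hS hT
    rcases seesaw hadd hnd hwsc hss.1 (inC_of_nonzero hS) (inC_of_nonzero hq) hsum with
      ⟨h1, _⟩ | ⟨h1, h2⟩
    · exact h1
    · exact hle.trans h1

/-- quotient of semistable has `τ` at least that of the whole. -/
lemma self_le_quot_τ (hadd : ClAdditive cl) (hnd : ClNondeg cl)
    (hwsc : IsWeakStability cl τ) {Y : 𝒜} (hss : Semistable cl τ Y)
    (S : Subobject Y) (hS : S ≠ ⊤) :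
    τ (cl Y) ≤ τ (cl (quotBySub S)) := by
  by_cases hB : IsZero ((S : 𝒜))
  · have h0 : cl ((S : 𝒜)) = 0 := cl_of_isZero hadd hB
    have : cl (quotBySub S) = cl Y := by rw [cl_quotBySub hadd, h0]; abel
    rw [this]
  · have hq : ¬ IsZero (quotBySub S) := fun hz => hS (eq_top_of_isZero_quotBySub hz)
    have hsum : cl Y = cl ((S : 𝒜)) + cl (quotBySub S) := by
      rw [cl_quotBySub hadd]; abel
    have hle := hss.2 S hB hS
    rcases seesaw hadd hnd hwsc hss.1 (inC_of_nonzero hB) (inC_of_nonzero hq) hsum with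
      ⟨_, h2⟩ | ⟨h1, h2⟩
    · exact h2
    · exact h2.trans hle


/-- Relative quotient of a semistable subobject: if `D ≤ C`, `D ≠ C` and `C` is
semistable then the class `cl C - cl D` is realized by a nonzero object and
`τ (cl C) ≤ τ (cl C - cl D)`. -/
lemma quot_rel (hadd : ClAdditive cl) (hnd : ClNondeg cl) (hwsc : IsWeakStability cl τ)
    {X : 𝒜} {C D : Subobject X} (h : D ≤ C) (hne : D ≠ C)
    (hss : Semistable cl τ ((C : 𝒜))) :
    InC cl (cl ((C : 𝒜)) - cl ((D : 𝒜))) ∧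
      τ (cl ((C : 𝒜))) ≤ τ (cl ((C : 𝒜)) - cl ((D : 𝒜))) := by
  have hQnz : ¬ IsZero (cokernel (Subobject.ofLE D C h)) := fun hz =>
    hne (eq_of_isZero_coker_ofLE h hz)
  constructor
  · exact ⟨_, hQnz, cl_coker_ofLE hadd h⟩
  · set D' : Subobject ((C : 𝒜)) := Subobject.mk (Subobject.ofLE D C h)
    have hD'T : D' ≠ ⊤ := by
      intro hT
      have : IsIso (Subobject.ofLE D C h) := (Subobject.isIso_iff_mk_eq_top _).mpr hT
      refine hne (le_antisymm h (Subobject.le_of_comm (inv (Subobject.ofLE D C h)) ?_))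
      simp [Subobject.ofLE_arrow]
    have := self_le_quot_τ hadd hnd hwsc hss D' hD'T
    have hclD' : cl ((D' : 𝒜)) = cl ((D : 𝒜)) :=
      cl_iso hadd (Subobject.underlyingIso (Subobject.ofLE D C h))
    rwa [cl_quotBySub hadd, hclD'] at this

/-- Semistability transfers along isomorphisms. -/
lemma semistable_of_iso (hadd : ClAdditive cl) {Y Z : 𝒜} (e : Y ≅ Z)
    (hss : Semistable cl τ Y) : Semistable cl τ Z := by
  refine ⟨fun hz => hss.1 (hz.of_iso e), fun S hSnz hST => ?_⟩
  set S₀ : Subobject Y := Subobject.mk (S.arrow ≫ e.inv)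
  have hiso : ((S₀ : 𝒜)) ≅ ((S : 𝒜)) := Subobject.underlyingIso _
  have hS₀nz : ¬ IsZero ((S₀ : 𝒜)) := fun hz => hSnz (hz.of_iso hiso.symm)
  have hS₀T : S₀ ≠ ⊤ := by
    intro hT
    have : IsIso (S.arrow ≫ e.inv) := (Subobject.isIso_iff_mk_eq_top _).mpr hT
    have : IsIso S.arrow := by
      have : IsIso ((S.arrow ≫ e.inv) ≫ e.hom) := inferInstance
      simpa using this
    exact hST (Subobject.eq_top_of_isIso_arrow S)
  have hkey := hss.2 S₀ hS₀nz hS₀T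
  rw [cl_quotBySub hadd,
    show cl ((S₀ : 𝒜)) = cl ((S : 𝒜)) from cl_iso hadd hiso,
    show cl Y = cl Z from cl_iso hadd e] at hkey
  rw [cl_quotBySub hadd]
  exact hkey

/-- Any nonzero subobject-type object embedded by a mono has an isomorphic
subobject of the target. -/
lemma exists_semistable_sub (hadd : ClAdditive cl) (hnd : ClNondeg cl)
    (hwsc : IsWeakStability cl τ) (hart : TauArtinian cl τ)
    {Y : 𝒜} (hY : ¬ IsZero Y) :
    ∃ S : Subobject Y, ¬ IsZero ((S : 𝒜)) ∧ Semistable cl τ ((S : 𝒜)) ∧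
      τ (cl Y) ≤ τ (cl ((S : 𝒜))) := by
  by_contra hcon
  push_neg at hcon
  -- step: every nonzero subobject `A` with `τ (cl Y) ≤ τ (cl A)` admits a strictly
  -- smaller destabilizing subobject
  have step : ∀ A : Subobject Y, ¬ IsZero ((A : 𝒜)) → τ (cl Y) ≤ τ (cl ((A : 𝒜))) →
      ∃ A₂ : Subobject Y, A₂ ≤ A ∧ A₂ ≠ A ∧ ¬ IsZero ((A₂ : 𝒜)) ∧
        τ (cl Y) ≤ τ (cl ((A₂ : 𝒜))) ∧
        τ (cl ((A : 𝒜)) - cl ((A₂ : 𝒜))) ≤ τ (cl ((A₂ : 𝒜))) := by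
    intro A hAnz hAτ
    have hnss : ¬ Semistable cl τ ((A : 𝒜)) := fun hss =>
      absurd hAτ (hcon A hAnz hss).not_ge
    rw [Semistable] at hnss
    push_neg at hnss
    obtain ⟨Tob, hTnz, hTne, hTlt⟩ := hnss hAnz
    refine ⟨Subobject.mk (Tob.arrow ≫ A.arrow), mk_comp_le A Tob,
      fun h => hTne (eq_top_of_mk_comp_eq A Tob h), ?_, ?_, ?_⟩
    · exact fun hz => hTnz (hz.of_iso (Subobject.underlyingIso _).symm)
    all_goals {
      have hclA₂ : cl (((Subobject.mk (Tob.arrow ≫ A.arrow) : Subobject Y)) : 𝒜)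
          = cl ((Tob : 𝒜)) := cl_iso hadd (Subobject.underlyingIso _)
      have hqnz : ¬ IsZero (quotBySub Tob) := fun hz => hTne (eq_top_of_isZero_quotBySub hz)
      have hsum : cl ((A : 𝒜)) = cl ((Tob : 𝒜)) + cl (quotBySub Tob) := by
        rw [cl_quotBySub hadd]; abel
      rcases seesaw hadd hnd hwsc hAnz (inC_of_nonzero hTnz) (inC_of_nonzero hqnz) hsum with
        ⟨h1, h2⟩ | ⟨h1, h2⟩
      · exact absurd (h1.trans h2) hTlt.not_ge
      · have hq : cl ((A : 𝒜)) - cl ((Tob : 𝒜)) = cl (quotBySub Tob) := by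
          rw [cl_quotBySub hadd]
        first
        | exact hAτ.trans (by rw [hclA₂]; exact h2)
        | { rw [hclA₂, hq]; exact h1.trans h2 }
    }
  -- build an infinite descending chain, contradicting `τ`-artinianness
  have htopnz : ¬ IsZero (((⊤ : Subobject Y)) : 𝒜) := by
    intro hz
    exact hY (hnd Y (by rw [← cl_top hadd Y]; exact cl_of_isZero hadd hz))
  have htopτ : τ (cl Y) ≤ τ (cl (((⊤ : Subobject Y)) : 𝒜)) := by rw [cl_top hadd]
  let P : Subobject Y → Prop := fun A => ¬ IsZero ((A : 𝒜)) ∧ τ (cl Y) ≤ τ (cl ((A : 𝒜)))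
  let f : {A : Subobject Y // P A} → {A : Subobject Y // P A} := fun A =>
    ⟨(step A.1 A.2.1 A.2.2).choose,
      (step A.1 A.2.1 A.2.2).choose_spec.2.2.1,
      (step A.1 A.2.1 A.2.2).choose_spec.2.2.2.1⟩
  let seq : ℕ → {A : Subobject Y // P A} := fun n => f^[n] ⟨⊤, htopnz, htopτ⟩
  have hseq : ∀ n, seq (n + 1) = f (seq n) := fun n =>
    Function.iterate_succ_apply' f n _
  refine hart ⟨Y, fun n => (seq n).1, fun n => ?_, fun n => ?_, fun n => ?_⟩
  · show (seq (n + 1)).1 ≤ (seq n).1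
    rw [hseq n]
    exact (step (seq n).1 (seq n).2.1 (seq n).2.2).choose_spec.1
  · show (seq (n + 1)).1 ≠ (seq n).1
    rw [hseq n]
    exact (step (seq n).1 (seq n).2.1 (seq n).2.2).choose_spec.2.1
  · show τ (cl (subQuot ((seq (n + 1)).1) ((seq n).1))) ≤ τ (cl (((seq (n + 1)).1 : 𝒜)))
    rw [hseq n]
    have hle := (step (seq n).1 (seq n).2.1 (seq n).2.2).choose_spec.1
    have h2 := (step (seq n).1 (seq n).2.1 (seq n).2.2).choose_spec.2.2.2.2
    rw [cl_subQuot hadd hle]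
    exact h2


lemma cl_coe_congr {X : 𝒜} {A B : Subobject X} (h : A = B) :
    cl ((A : 𝒜)) = cl ((B : 𝒜)) := by rw [h]

/-- Every proper quotient class of `A ⊔ B` has `τ`-value at least `t`. -/
lemma key_quot (hadd : ClAdditive cl) (hnd : ClNondeg cl) (hwsc : IsWeakStability cl τ)
    {X : 𝒜} {t : T} {A B : Subobject X}
    (hAss : Semistable cl τ ((A : 𝒜))) (hBss : Semistable cl τ ((B : 𝒜)))
    (hAt : τ (cl ((A : 𝒜))) = t) (hBt : τ (cl ((B : 𝒜))) = t)
    (S : Subobject X) (hS : S ≤ A ⊔ B) (hSne : S ≠ A ⊔ B) :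
    t ≤ τ (cl (((A ⊔ B : Subobject X)) : 𝒜) - cl ((S : 𝒜))) := by
  by_cases hAS : A ≤ S
  · have hBS : ¬ B ≤ S := fun h => hSne (le_antisymm hS (sup_le hAS h))
    have hSB : S ⊔ B = A ⊔ B :=
      le_antisymm (sup_le hS le_sup_right) (sup_le (hAS.trans le_sup_left) le_sup_right)
    have hmod := cl_sup_inf hadd S B
    rw [hSB] at hmod
    obtain ⟨_, hτ⟩ := quot_rel hadd hnd hwsc (inf_le_right : S ⊓ B ≤ B)
      (fun h => hBS (inf_eq_right.mp h)) hBss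
    rw [hBt] at hτ
    have hcls : cl (((A ⊔ B : Subobject X)) : 𝒜) - cl ((S : 𝒜))
        = cl ((B : 𝒜)) - cl (((S ⊓ B : Subobject X)) : 𝒜) := by
      linear_combination (norm := abel) hmod
    rw [hcls]
    exact hτ
  · have hmodA := cl_sup_inf hadd A S
    obtain ⟨hInCα, hτα⟩ := quot_rel hadd hnd hwsc (inf_le_left : A ⊓ S ≤ A)
      (fun h => hAS (inf_eq_left.mp h)) hAss
    rw [hAt] at hτα
    have hα : cl ((A : 𝒜)) - cl (((A ⊓ S : Subobject X)) : 𝒜)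
        = cl (((A ⊔ S : Subobject X)) : 𝒜) - cl ((S : 𝒜)) := by
      linear_combination (norm := abel) -hmodA
    rw [hα] at hInCα hτα
    by_cases hBA₁ : B ≤ A ⊔ S
    · have heq : A ⊔ S = A ⊔ B :=
        le_antisymm (sup_le le_sup_left hS) (sup_le le_sup_left hBA₁)
      rw [heq] at hτα
      exact hτα
    · have hsupB : (A ⊔ S) ⊔ B = A ⊔ B :=
        le_antisymm (sup_le (sup_le le_sup_left hS) le_sup_right)
          (sup_le (le_sup_left.trans le_sup_left) le_sup_right)
      have hmodB := cl_sup_inf hadd (A ⊔ S) B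
      rw [hsupB] at hmodB
      obtain ⟨hInCγ, hτγ⟩ := quot_rel hadd hnd hwsc (inf_le_right : (A ⊔ S) ⊓ B ≤ B)
        (fun h => hBA₁ (inf_eq_right.mp h)) hBss
      rw [hBt] at hτγ
      have hγ : cl ((B : 𝒜)) - cl ((((A ⊔ S) ⊓ B : Subobject X)) : 𝒜)
          = cl (((A ⊔ B : Subobject X)) : 𝒜) - cl (((A ⊔ S : Subobject X)) : 𝒜) := by
        linear_combination (norm := abel) -hmodB
      rw [hγ] at hInCγ hτγ
      have hInCβ : InC cl (cl (((A ⊔ B : Subobject X)) : 𝒜) - cl ((S : 𝒜))) := by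
        refine ⟨cokernel (Subobject.ofLE S (A ⊔ B) hS), ?_, cl_coker_ofLE hadd hS⟩
        exact fun hz => hSne (eq_of_isZero_coker_ofLE hS hz)
      rcases hwsc _ _ _ hInCα hInCβ hInCγ (by abel) with ⟨h1, _⟩ | ⟨h1, _⟩
      · exact hτα.trans h1
      · exact hτγ.trans h1



end Helpers

/-- **Step 5 of the proof of Theorem 4.4.** Suppose `𝒜` is `τ`-artinian, `X`
is nonzero and every nonzero `τ`-semistable subobject of `X` has `τ`-value at
most `t`.  If `A, B ⊆ X` are nonzero `τ`-semistable subobjects with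
`τ(cl A) = τ(cl B) = t`, then `A ⊔ B` is `τ`-semistable with
`τ(cl (A ⊔ B)) = t`. -/
theorem join_of_semistable_max (cl : 𝒜 → K) (τ : K → T)
    (hadd : ClAdditive cl) (hnd : ClNondeg cl)
    (hwsc : IsWeakStability cl τ) (hart : TauArtinian cl τ)
    (X : 𝒜) (hX : ¬ IsZero X) (t : T)
    (hmax : ∀ A : Subobject X, ¬ IsZero ((A : 𝒜)) → Semistable cl τ ((A : 𝒜)) →
      τ (cl ((A : 𝒜))) ≤ t)
    (A B : Subobject X)
    (hA : ¬ IsZero ((A : 𝒜))) (hB : ¬ IsZero ((B : 𝒜)))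
    (hAss : Semistable cl τ ((A : 𝒜))) (hBss : Semistable cl τ ((B : 𝒜)))
    (hAt : τ (cl ((A : 𝒜))) = t) (hBt : τ (cl ((B : 𝒜))) = t) :
    Semistable cl τ (((A ⊔ B : Subobject X) : 𝒜)) ∧
      τ (cl (((A ⊔ B : Subobject X) : 𝒜))) = t := by
  have hMnz : ¬ IsZero (((A ⊔ B : Subobject X)) : 𝒜) := by
    intro hz
    exact hA ((isZero_coe_iff A).mpr (le_bot_iff.mp
      ((isZero_coe_iff (A ⊔ B)).mp hz ▸ (le_sup_left : A ≤ A ⊔ B))))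
  -- upper bound for τ of the join
  have hMle : τ (cl (((A ⊔ B : Subobject X)) : 𝒜)) ≤ t := by
    obtain ⟨S', hS'nz, hS'ss, hS'τ⟩ := exists_semistable_sub hadd hnd hwsc hart hMnz
    have e := Subobject.underlyingIso (S'.arrow ≫ (A ⊔ B : Subobject X).arrow)
    have hnz : ¬ IsZero ((Subobject.mk (S'.arrow ≫ (A ⊔ B : Subobject X).arrow) : 𝒜)) :=
      fun hz => hS'nz (hz.of_iso e.symm)
    have hss : Semistable cl τ ((Subobject.mk (S'.arrow ≫ (A ⊔ B : Subobject X).arrow) : 𝒜)) :=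
      semistable_of_iso hadd e.symm hS'ss
    have h1 := hmax _ hnz hss
    rw [show cl ((Subobject.mk (S'.arrow ≫ (A ⊔ B : Subobject X).arrow) : 𝒜))
      = cl ((S' : 𝒜)) from cl_iso hadd e] at h1
    exact hS'τ.trans h1
  -- τ of the join equals t
  have hMt : τ (cl (((A ⊔ B : Subobject X)) : 𝒜)) = t := by
    by_cases hAM : A = A ⊔ B
    · rw [← hAM]
      exact hAt
    · refine le_antisymm hMle ?_
      have hk := key_quot hadd hnd hwsc hAss hBss hAt hBt A le_sup_left hAM
      have hInCγ : InC cl (cl (((A ⊔ B : Subobject X)) : 𝒜) - cl ((A : 𝒜))) := by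
        refine ⟨cokernel (Subobject.ofLE A (A ⊔ B) le_sup_left), ?_,
          cl_coker_ofLE hadd le_sup_left⟩
        exact fun hz => hAM (eq_of_isZero_coker_ofLE le_sup_left hz)
      rcases hwsc (cl ((A : 𝒜))) _ _ (inC_of_nonzero hA) (inC_of_nonzero hMnz) hInCγ
        (by abel) with ⟨h1, _⟩ | ⟨h1, _⟩
      · rw [← hAt]; exact h1
      · exact hk.trans h1
  refine ⟨⟨hMnz, fun S hSnz hST => ?_⟩, hMt⟩
  -- semistability of the join
  have hSle : Subobject.mk (S.arrow ≫ (A ⊔ B : Subobject X).arrow) ≤ A ⊔ B := mk_comp_le _ _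
  have hSne : Subobject.mk (S.arrow ≫ (A ⊔ B : Subobject X).arrow) ≠ A ⊔ B :=
    fun h => hST (eq_top_of_mk_comp_eq _ _ h)
  have hk := key_quot hadd hnd hwsc hAss hBss hAt hBt _ hSle hSne
  have hclS : cl ((Subobject.mk (S.arrow ≫ (A ⊔ B : Subobject X).arrow) : 𝒜))
      = cl ((S : 𝒜)) := cl_iso hadd (Subobject.underlyingIso _)
  rw [hclS] at hk
  -- τ (cl S) ≤ t
  have hSt : τ (cl ((S : 𝒜))) ≤ t := by
    obtain ⟨S'', hS''nz, hS''ss, hS''τ⟩ := exists_semistable_sub hadd hnd hwsc hart hSnz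
    have e := Subobject.underlyingIso
      (S''.arrow ≫ (S.arrow ≫ (A ⊔ B : Subobject X).arrow))
    have hnz : ¬ IsZero
        ((Subobject.mk (S''.arrow ≫ (S.arrow ≫ (A ⊔ B : Subobject X).arrow)) : 𝒜)) :=
      fun hz => hS''nz (hz.of_iso e.symm)
    have hss := semistable_of_iso hadd e.symm hS''ss
    have h1 := hmax _ hnz hss
    rw [show cl ((Subobject.mk (S''.arrow ≫ (S.arrow ≫ (A ⊔ B : Subobject X).arrow)) : 𝒜))
      = cl ((S'' : 𝒜)) from cl_iso hadd e] at h1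
    exact hS''τ.trans h1
  rw [cl_quotBySub hadd]
  exact hSt.trans hk


end JoyceIII
end
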